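/- Let M be a compact metric space, f : M → M a homeomorphism, Λ ⊆ M an f-invariant set, d a positive integer, E = EuclideanSpace ℝ (Fin d), and A : M → (E ≃L[ℝ] E) a continuous map. Suppose (E¹⁻, E¹⁺) and (E²⁻, E²⁺) are both dominated splittings for the cocycle A over Λ, and that dim E¹⁻(x) = dim E²⁻(x) for all x ∈ Λ. Then E¹⁻(x) = E²⁻(x) and E¹⁺(x) = E²⁺(x) for every x ∈ Λ. -/

import Mathlib

/-- `eqCocycle f A n x = A(f^{n-1} x) ∘ ⋯ ∘ A(f x) ∘ A(x)`. -/
noncomputable def eqCocycle {M : Type*} {E : Type*} [NormedAddCommGroup E]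
    [NormedSpace ℝ E] (f : M → M) (A : M → (E ≃L[ℝ] E)) : ℕ → M → (E ≃L[ℝ] E)
  | 0, _ => ContinuousLinearEquiv.refl ℝ E
  | n + 1, x => (eqCocycle f A n x).trans (A (f^[n] x))

/-- `(E⁻, E⁺)` is a dominated splitting with constants `K, lam` for the cocycle
generated by `A` over the `f`-invariant set `Λ`: at each point of `Λ` the two
subspaces are complementary (`E⁻(x) ⊕ E⁺(x) = E`), they are invariant under the
cocycle, `K > 0`, `lam > 0`, and for all `n ≥ 0`, `x ∈ Λ` and unit vectors
`u ∈ E⁻(x)`, `w ∈ E⁺(x)` one has `‖A⁽ⁿ⁾(x) u‖ ≤ K e^{-lam n} ‖A⁽ⁿ⁾(x) w‖`. -/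
def IsDominatedSplitting {M : Type*} {E : Type*} [NormedAddCommGroup E]
    [NormedSpace ℝ E] (f : M → M) (A : M → (E ≃L[ℝ] E)) (Λ : Set M)
    (Em Ep : M → Submodule ℝ E) (K lam : ℝ) : Prop :=
  (∀ x ∈ Λ, IsCompl (Em x) (Ep x)) ∧
  (∀ x ∈ Λ, (Em x).map (A x).toLinearEquiv.toLinearMap = Em (f x)) ∧
  (∀ x ∈ Λ, (Ep x).map (A x).toLinearEquiv.toLinearMap = Ep (f x)) ∧
  0 < K ∧ 0 < lam ∧
  ∀ n : ℕ, ∀ x ∈ Λ, ∀ u ∈ Em x, ∀ w ∈ Ep x, ‖u‖ = 1 → ‖w‖ = 1 →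
    ‖eqCocycle f A n x u‖ ≤ K * Real.exp (-lam * n) * ‖eqCocycle f A n x w‖

/-!
If neither stable space contains the other, there are `v ∈ E¹⁻` with nonzero `E²⁺`-component `b`
and `v' ∈ E²⁻` with nonzero `E¹⁺`-component `b'`. Domination makes a vector grow like its
`E⁺`-component, so along the cocycle `v ≪ b' ≲ v' ≪ b ≲ v`, which is absurd. Hence one stable
space contains the other, and equal dimensions force equality. The unstable spaces are the stable
spaces of the inverse cocycle along backward orbits, so they coincide as well.
-/

open Filter Asymptotics Module Topology

section Domination

variable {E F : Type*} [NormedAddCommGroup E] [NormedSpace ℝ E]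
  [NormedAddCommGroup F] [NormedSpace ℝ F]

def IsDominatedPair (T : ℕ → E →L[ℝ] F) (U W : Submodule ℝ E) : Prop :=
  ∀ u ∈ U, ∀ w ∈ W, w ≠ 0 → (fun n => T n u) =o[atTop] fun n => T n w

lemma norm_mul_norm_le_of_forall_norm_eq_one {S : E →L[ℝ] F} {U W : Submodule ℝ E} {c : ℝ}
    (h : ∀ u ∈ U, ∀ w ∈ W, ‖u‖ = 1 → ‖w‖ = 1 → ‖S u‖ ≤ c * ‖S w‖)
    {u w : E} (hu : u ∈ U) (hw : w ∈ W) :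
    ‖S u‖ * ‖w‖ ≤ c * ‖u‖ * ‖S w‖ := by
  rcases eq_or_ne u 0 with rfl | hu0
  · simp
  rcases eq_or_ne w 0 with rfl | hw0
  · simp
  have hun : 0 < ‖u‖ := norm_pos_iff.2 hu0
  have hwn : 0 < ‖w‖ := norm_pos_iff.2 hw0
  have key := h (‖u‖⁻¹ • u) (U.smul_mem _ hu) (‖w‖⁻¹ • w) (W.smul_mem _ hw)
    (norm_smul_inv_norm hu0) (norm_smul_inv_norm hw0)
  rw [map_smul, map_smul, norm_smul, norm_smul, norm_inv, norm_inv, norm_norm, norm_norm,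
    inv_mul_le_iff₀ hun] at key
  calc ‖S u‖ * ‖w‖ ≤ ‖u‖ * (c * (‖w‖⁻¹ * ‖S w‖)) * ‖w‖ := by gcongr
    _ = c * ‖u‖ * ‖S w‖ := by field_simp

lemma isDominatedPair_of_norm_mul_norm_le {T : ℕ → E →L[ℝ] F} {U W : Submodule ℝ E}
    {c : ℕ → ℝ} (hc : Tendsto c atTop (𝓝 0))
    (h : ∀ n, ∀ u ∈ U, ∀ w ∈ W, ‖T n u‖ * ‖w‖ ≤ c n * ‖u‖ * ‖T n w‖) :
    IsDominatedPair T U W := by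
  intro u hu w hw hw0
  have hwn : 0 < ‖w‖ := norm_pos_iff.2 hw0
  have hc' : Tendsto (fun n => c n * ‖u‖ / ‖w‖) atTop (𝓝 0) := by
    simpa using (hc.mul_const ‖u‖).div_const ‖w‖
  refine isLittleO_iff.2 fun ε hε => ?_
  filter_upwards [hc'.eventually (gt_mem_nhds hε)] with n hn
  calc ‖T n u‖ ≤ c n * ‖u‖ / ‖w‖ * ‖T n w‖ := by
        rw [div_mul_eq_mul_div, le_div_iff₀ hwn]; linarith [h n u hu w hw]
    _ ≤ ε * ‖T n w‖ := by gcongr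

lemma IsDominatedPair.isBigO_add {T : ℕ → E →L[ℝ] F} {U W : Submodule ℝ E}
    (h : IsDominatedPair T U W) {u w : E} (hu : u ∈ U) (hw : w ∈ W) (hw0 : w ≠ 0) :
    (fun n => T n w) =O[atTop] fun n => T n (u + w) := by
  simpa only [map_add] using (h u hu w hw hw0).right_isBigO_add

lemma IsCompl.exists_add_eq_of_not_le {U₁ U₂ W₂ : Submodule ℝ E} (hc₂ : IsCompl U₂ W₂)
    (h : ¬ U₁ ≤ U₂) : ∃ v ∈ U₁, ∃ a ∈ U₂, ∃ b ∈ W₂, b ≠ 0 ∧ a + b = v := by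
  obtain ⟨v, hv, hvU₂⟩ := SetLike.not_le_iff_exists.1 h
  obtain ⟨a, ha, b, hb, rfl⟩ := Submodule.mem_sup.1 (hc₂.sup_eq_top ▸ Submodule.mem_top (x := v))
  refine ⟨_, hv, a, ha, b, hb, ?_, rfl⟩
  rintro rfl
  exact hvU₂ (by simpa using ha)

lemma IsDominatedPair.le_or_le {T : ℕ → E →L[ℝ] F} (hT : ∀ n, Function.Injective (T n))
    {U₁ W₁ U₂ W₂ : Submodule ℝ E} (hc₁ : IsCompl U₁ W₁) (hc₂ : IsCompl U₂ W₂)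
    (h₁ : IsDominatedPair T U₁ W₁) (h₂ : IsDominatedPair T U₂ W₂) : U₁ ≤ U₂ ∨ U₂ ≤ U₁ := by
  by_contra! ⟨h₁₂, h₂₁⟩
  obtain ⟨v, hv, a, ha, b, hb, hb0, rfl⟩ := hc₂.exists_add_eq_of_not_le h₁₂
  obtain ⟨v', hv', a', ha', b', hb', hb'0, rfl⟩ := hc₁.exists_add_eq_of_not_le h₂₁
  -- `v ≪ b' ≲ v' ≪ b ≲ v`
  have hself : (fun n => T n (a + b)) =o[atTop] fun n => T n (a + b) :=
    (h₁ _ hv b' hb' hb'0).trans_isBigO (h₁.isBigO_add ha' hb' hb'0)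
      |>.trans (h₂ _ hv' b hb hb0) |>.trans_isBigO (h₂.isBigO_add ha hb hb0)
  have hv0 : a + b ≠ 0 := fun h0 => hb0 <| Submodule.disjoint_def.1 hc₂.disjoint b
    (by simpa [eq_neg_of_add_eq_zero_right h0] using ha) hb
  exact isLittleO_irrefl (Frequently.of_forall fun n => (map_ne_zero_iff _ (hT n)).2 hv0) hself

lemma IsDominatedPair.eq [FiniteDimensional ℝ E] {T : ℕ → E →L[ℝ] F}
    (hT : ∀ n, Function.Injective (T n))
    {U₁ W₁ U₂ W₂ : Submodule ℝ E} (hc₁ : IsCompl U₁ W₁) (hc₂ : IsCompl U₂ W₂)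
    (h₁ : IsDominatedPair T U₁ W₁) (h₂ : IsDominatedPair T U₂ W₂)
    (hrank : finrank ℝ U₁ = finrank ℝ U₂) : U₁ = U₂ := by
  rcases h₁.le_or_le hT hc₁ hc₂ h₂ with h | h
  · exact Submodule.eq_of_le_of_finrank_eq h hrank
  · exact (Submodule.eq_of_le_of_finrank_eq h hrank.symm).symm

end Domination

section Cocycle

variable {M E : Type*} [NormedAddCommGroup E] [NormedSpace ℝ E]
  {A : M → (E ≃L[ℝ] E)} {Λ : Set M} {Em Ep : M → Submodule ℝ E} {K lam : ℝ}

lemma eqCocycle_map_eq {f : M → M} (hf : Set.MapsTo f Λ Λ) {F : M → Submodule ℝ E}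
    (hF : ∀ x ∈ Λ, (F x).map (A x).toLinearEquiv.toLinearMap = F (f x)) (n : ℕ) {x : M}
    (hx : x ∈ Λ) : (F x).map (eqCocycle f A n x).toLinearEquiv.toLinearMap = F (f^[n] x) := by
  induction n with
  | zero => exact Submodule.map_id _
  | succ n ih =>
    rw [eqCocycle, ContinuousLinearEquiv.trans_toLinearEquiv, LinearEquiv.coe_trans,
      Submodule.map_comp, ih, hF _ (hf.iterate n hx), Function.iterate_succ_apply']

lemma symm_eqCocycle_mem {f : M → M} (hf : Set.MapsTo f Λ Λ) {F : M → Submodule ℝ E}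
    (hF : ∀ x ∈ Λ, (F x).map (A x).toLinearEquiv.toLinearMap = F (f x)) (n : ℕ) {x : M}
    (hx : x ∈ Λ) {v : E} (hv : v ∈ F (f^[n] x)) : (eqCocycle f A n x).symm v ∈ F x := by
  rw [← eqCocycle_map_eq hf hF n hx] at hv
  exact (Submodule.mem_map_equiv _).1 hv

noncomputable def invCocycle (f : M ≃ M) (A : M → (E ≃L[ℝ] E)) (n : ℕ) (x : M) : E ≃L[ℝ] E :=
  (eqCocycle f A n (f.symm^[n] x)).symm

lemma tendsto_mul_exp_neg_mul_natCast (K : ℝ) {lam : ℝ} (hlam : 0 < lam) :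
    Tendsto (fun n : ℕ => K * Real.exp (-lam * n)) atTop (𝓝 0) := by
  have := Real.tendsto_exp_neg_atTop_nhds_zero.comp
    (tendsto_natCast_atTop_atTop.const_mul_atTop hlam)
  simpa [neg_mul] using this.const_mul K

namespace IsDominatedSplitting

lemma norm_mul_norm_le {f : M → M} (h : IsDominatedSplitting f A Λ Em Ep K lam) (n : ℕ)
    {x : M} (hx : x ∈ Λ) {u w : E} (hu : u ∈ Em x) (hw : w ∈ Ep x) :
    ‖eqCocycle f A n x u‖ * ‖w‖ ≤ K * Real.exp (-lam * n) * ‖u‖ * ‖eqCocycle f A n x w‖ :=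
  norm_mul_norm_le_of_forall_norm_eq_one (S := (eqCocycle f A n x : E →L[ℝ] E))
    (h.2.2.2.2.2 n x hx) hu hw

lemma isDominatedPair {f : M → M} (h : IsDominatedSplitting f A Λ Em Ep K lam) {x : M}
    (hx : x ∈ Λ) :
    IsDominatedPair (fun n => (eqCocycle f A n x : E →L[ℝ] E)) (Em x) (Ep x) :=
  isDominatedPair_of_norm_mul_norm_le (tendsto_mul_exp_neg_mul_natCast K h.2.2.2.2.1)
    fun n _ hu _ hw => h.norm_mul_norm_le n hx hu hw

lemma norm_invCocycle_mul_norm_le {f : M ≃ M} (hΛ : f '' Λ = Λ)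
    (h : IsDominatedSplitting f A Λ Em Ep K lam) (n : ℕ) {x : M} (hx : x ∈ Λ) {u w : E}
    (hu : u ∈ Ep x) (hw : w ∈ Em x) :
    ‖invCocycle f A n x u‖ * ‖w‖ ≤ K * Real.exp (-lam * n) * ‖u‖ * ‖invCocycle f A n x w‖ := by
  have hf : Set.MapsTo f Λ Λ := fun y hy => hΛ ▸ Set.mem_image_of_mem f hy
  have hfsymm : Set.MapsTo f.symm Λ Λ := by
    intro y hy
    rw [← hΛ] at hy
    obtain ⟨z, hz, rfl⟩ := hy
    simpa using hz
  have hy := hfsymm.iterate n hx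
  have hx' : f^[n] (f.symm^[n] x) = x := (Function.LeftInverse.iterate f.apply_symm_apply n) x
  -- the forward inequality at `f⁻ⁿ x`, applied to the preimages of `w` and `u`
  have key := h.norm_mul_norm_le n hy (symm_eqCocycle_mem hf h.2.1 n hy (hx' ▸ hw))
    (symm_eqCocycle_mem hf h.2.2.1 n hy (hx' ▸ hu))
  simp only [ContinuousLinearEquiv.apply_symm_apply] at key
  unfold invCocycle
  linarith

lemma isDominatedPair_invCocycle {f : M ≃ M} (hΛ : f '' Λ = Λ)
    (h : IsDominatedSplitting f A Λ Em Ep K lam) {x : M} (hx : x ∈ Λ) :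
    IsDominatedPair (fun n => (invCocycle f A n x : E →L[ℝ] E)) (Ep x) (Em x) :=
  isDominatedPair_of_norm_mul_norm_le (tendsto_mul_exp_neg_mul_natCast K h.2.2.2.2.1)
    fun n _ hu _ hw => h.norm_invCocycle_mul_norm_le hΛ n hx hu hw

end IsDominatedSplitting

end Cocycle

theorem dominated_splitting_unique_general
    {M : Type*} [MetricSpace M]
    (f : M ≃ₜ M) (Λ : Set M) (hΛ : f '' Λ = Λ)
    (d : ℕ)
    (A : M → (EuclideanSpace ℝ (Fin d) ≃L[ℝ] EuclideanSpace ℝ (Fin d)))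
    (Em₁ Ep₁ Em₂ Ep₂ : M → Submodule ℝ (EuclideanSpace ℝ (Fin d)))
    (h₁ : ∃ K lam : ℝ, IsDominatedSplitting f A Λ Em₁ Ep₁ K lam)
    (h₂ : ∃ K lam : ℝ, IsDominatedSplitting f A Λ Em₂ Ep₂ K lam)
    (hdim : ∀ x ∈ Λ, Module.finrank ℝ (Em₁ x) = Module.finrank ℝ (Em₂ x)) :
    ∀ x ∈ Λ, Em₁ x = Em₂ x ∧ Ep₁ x = Ep₂ x := by
  intro x hx
  obtain ⟨K₁, l₁, h₁⟩ := h₁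
  obtain ⟨K₂, l₂, h₂⟩ := h₂
  have hc₁ := h₁.1 x hx
  have hc₂ := h₂.1 x hx
  refine ⟨IsDominatedPair.eq (fun n => (eqCocycle f A n x).injective) hc₁ hc₂
    (h₁.isDominatedPair hx) (h₂.isDominatedPair hx) (hdim x hx), ?_⟩
  refine IsDominatedPair.eq (fun n => (invCocycle f.toEquiv A n x).injective) hc₁.symm hc₂.symm
    (h₁.isDominatedPair_invCocycle hΛ hx) (h₂.isDominatedPair_invCocycle hΛ hx) ?_
  have r₁ := Submodule.finrank_add_eq_of_isCompl hc₁
  have r₂ := Submodule.finrank_add_eq_of_isCompl hc₂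
  have := hdim x hx
  omega

/-- Uniqueness of dominated splittings of prescribed index: two dominated
splittings for the same cocycle over the same invariant set, whose stable
subbundles have the same dimension at every point, coincide. -/
theorem dominated_splitting_unique
    {M : Type*} [MetricSpace M] [CompactSpace M]
    (f : M ≃ₜ M) (Λ : Set M) (hΛ : f '' Λ = Λ)
    (d : ℕ) (hd : 0 < d)
    (A : M → (EuclideanSpace ℝ (Fin d) ≃L[ℝ] EuclideanSpace ℝ (Fin d)))
    (hA : Continuous fun x => (A x : EuclideanSpace ℝ (Fin d) →L[ℝ] EuclideanSpace ℝ (Fin d)))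
    (Em₁ Ep₁ Em₂ Ep₂ : M → Submodule ℝ (EuclideanSpace ℝ (Fin d)))
    (h₁ : ∃ K lam : ℝ, IsDominatedSplitting f A Λ Em₁ Ep₁ K lam)
    (h₂ : ∃ K lam : ℝ, IsDominatedSplitting f A Λ Em₂ Ep₂ K lam)
    (hdim : ∀ x ∈ Λ, Module.finrank ℝ (Em₁ x) = Module.finrank ℝ (Em₂ x)) :
    ∀ x ∈ Λ, Em₁ x = Em₂ x ∧ Ep₁ x = Ep₂ x :=
  dominated_splitting_unique_general f Λ hΛ d A Em₁ Ep₁ Em₂ Ep₂ h₁ h₂ hdim
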